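/- arXiv:2508.08191 — 6 statements merged into one kernel-verified Lean document; each statement's English description precedes it below -/
import Mathlib

section
/- For the trivariate tricycle code with matrices H_X, H_Z, M_Z built from circulants A = circ(a), B = circ(b), C = circ(c), the number of logical qubits k := 3N − rank(H_X) − rank(H_Z) satisfies k = −N + dim_{𝔽₂}(ker A ∩ ker B ∩ ker C) + dim_{𝔽₂}(ker [0 C B] ∩ ker [C 0 A] ∩ ker [B A 0]), where [0 C B], [C 0 A], [B A 0] denote the N × 3N block matrices with the indicated blocks and the intersections are taken inside 𝔽₂^{3N} (respectively 𝔽₂^G for the first intersection). -/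
open Matrix

/-- `H_X = [A B C]`, an `N × 3N` matrix with columns indexed by `Fin 3 × G`,
where `A = circ(a)`, `B = circ(b)`, `C = circ(c)`. -/
def TT_HX {G : Type*} [AddCommGroup G] (a b c : G → ZMod 2) :
    Matrix G (Fin 3 × G) (ZMod 2) :=
  Matrix.of fun g p =>
    ![Matrix.circulant a, Matrix.circulant b, Matrix.circulant c] p.1 g p.2

/-- `H_Z = [[0, Cᵀ, Bᵀ], [Cᵀ, 0, Aᵀ], [Bᵀ, Aᵀ, 0]]`, a `3N × 3N` block matrix. -/
def TT_HZ {G : Type*} [AddCommGroup G] (a b c : G → ZMod 2) :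
    Matrix (Fin 3 × G) (Fin 3 × G) (ZMod 2) :=
  Matrix.of fun p q =>
    ![![0, (Matrix.circulant c)ᵀ, (Matrix.circulant b)ᵀ],
      ![(Matrix.circulant c)ᵀ, 0, (Matrix.circulant a)ᵀ],
      ![(Matrix.circulant b)ᵀ, (Matrix.circulant a)ᵀ, 0]] p.1 q.1 p.2 q.2

/-- The block matrix `[0 C B]`. -/
def TT_row1 {G : Type*} [AddCommGroup G] (a b c : G → ZMod 2) :
    Matrix G (Fin 3 × G) (ZMod 2) :=
  Matrix.of fun g p => ![0, Matrix.circulant c, Matrix.circulant b] p.1 g p.2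

/-- The block matrix `[C 0 A]`. -/
def TT_row2 {G : Type*} [AddCommGroup G] (a b c : G → ZMod 2) :
    Matrix G (Fin 3 × G) (ZMod 2) :=
  Matrix.of fun g p => ![Matrix.circulant c, 0, Matrix.circulant a] p.1 g p.2

/-- The block matrix `[B A 0]`. -/
def TT_row3 {G : Type*} [AddCommGroup G] (a b c : G → ZMod 2) :
    Matrix G (Fin 3 × G) (ZMod 2) :=
  Matrix.of fun g p => ![Matrix.circulant b, Matrix.circulant a, 0] p.1 g p.2

/-!
By rank–nullity, `rank H_X = rank H_Xᵀ = N - dim ker H_Xᵀ` and `rank H_Z = 3N - dim ker H_Z`.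
Reindexing by the reflection `g ↦ -g` of `G` transposes every circulant
(`circ(v)(-i, -j) = circ(v)(j, i)`), so it turns `H_Xᵀ` into the stack of `A`, `B`, `C` and
`H_Z` into the stack of `[0 C B]`, `[C 0 A]`, `[B A 0]`, without changing ranks. The kernel of
a stack is the intersection of the kernels, and substituting gives the formula.
-/

section TricycleRank

open Module

theorem iInf_fin_three {α : Type*} [CompleteLattice α] (f : Fin 3 → α) :
    ⨅ i, f i = f 0 ⊓ f 1 ⊓ f 2 :=
  iSup_fin_three (α := αᵒᵈ)

theorem Matrix.circulant_apply_neg_neg {G α : Type*} [AddCommGroup G] (v : G → α) (i j : G) :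
    circulant v (-i) (-j) = circulant v j i := by
  simp [neg_add_eq_sub]

theorem Matrix.rank_add_finrank_ker_mulVecLin {m n K : Type*} [Fintype n] [Field K]
    (M : Matrix m n K) : M.rank + finrank K (LinearMap.ker M.mulVecLin) = Fintype.card n := by
  rw [rank, LinearMap.finrank_range_add_finrank_ker, finrank_fintype_fun_eq_card]

def rowStack {ι m n α : Type*} (M : ι → Matrix m n α) : Matrix (ι × m) n α :=
  of fun p => M p.1 p.2

theorem ker_rowStack_mulVecLin {ι m n R : Type*} [Fintype n] [CommSemiring R]
    (M : ι → Matrix m n R) :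
    LinearMap.ker (rowStack M).mulVecLin = ⨅ i, LinearMap.ker (M i).mulVecLin := by
  ext v
  simp only [LinearMap.mem_ker, Submodule.mem_iInf, mulVecLin_apply, funext_iff, Prod.forall]
  rfl

theorem ker_rowStack_fin_three_mulVecLin {m n R : Type*} [Fintype n] [CommSemiring R]
    (M₀ M₁ M₂ : Matrix m n R) :
    LinearMap.ker (rowStack ![M₀, M₁, M₂]).mulVecLin =
      LinearMap.ker M₀.mulVecLin ⊓ LinearMap.ker M₁.mulVecLin ⊓ LinearMap.ker M₂.mulVecLin := by
  rw [ker_rowStack_mulVecLin, iInf_fin_three]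
  rfl

variable {G : Type*} [AddCommGroup G] (a b c : G → ZMod 2)

abbrev negSnd (G : Type*) [AddCommGroup G] : Fin 3 × G ≃ Fin 3 × G :=
  (Equiv.refl _).prodCongr (Equiv.neg G)

theorem TT_HX_transpose_submatrix_neg :
    (TT_HX a b c)ᵀ.submatrix (negSnd G) (Equiv.neg G) =
      rowStack ![circulant a, circulant b, circulant c] := by
  ext ⟨i, g⟩ h
  fin_cases i <;> exact circulant_apply_neg_neg _ h g

theorem TT_HZ_submatrix_neg :
    (TT_HZ a b c).submatrix (negSnd G) (negSnd G) =
      rowStack ![TT_row1 a b c, TT_row2 a b c, TT_row3 a b c] := by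
  ext ⟨i, g⟩ ⟨j, h⟩
  fin_cases i <;> fin_cases j <;> first | rfl | exact circulant_apply_neg_neg _ h g

variable [Fintype G]

theorem rank_TT_HX_add_finrank_ker :
    (TT_HX a b c).rank + finrank (ZMod 2) ↥(LinearMap.ker (circulant a).mulVecLin ⊓
        LinearMap.ker (circulant b).mulVecLin ⊓ LinearMap.ker (circulant c).mulVecLin) =
      Fintype.card G := by
  rw [← rank_transpose, ← rank_submatrix _ (negSnd G) (Equiv.neg G),
    TT_HX_transpose_submatrix_neg, ← ker_rowStack_fin_three_mulVecLin,
    rank_add_finrank_ker_mulVecLin]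

theorem rank_TT_HZ_add_finrank_ker :
    (TT_HZ a b c).rank + finrank (ZMod 2) ↥(LinearMap.ker (TT_row1 a b c).mulVecLin ⊓
        LinearMap.ker (TT_row2 a b c).mulVecLin ⊓ LinearMap.ker (TT_row3 a b c).mulVecLin) =
      3 * Fintype.card G := by
  rw [← rank_submatrix _ (negSnd G) (negSnd G), TT_HZ_submatrix_neg,
    ← ker_rowStack_fin_three_mulVecLin, rank_add_finrank_ker_mulVecLin, Fintype.card_prod,
    Fintype.card_fin]

end TricycleRank

theorem tt_num_logical_qubits_general {G : Type*} [AddCommGroup G] [Fintype G]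
    (a b c : G → ZMod 2) :
    (3 * (Fintype.card G : ℤ)) - ((TT_HX a b c).rank : ℤ) - ((TT_HZ a b c).rank : ℤ) =
      -(Fintype.card G : ℤ)
        + (Module.finrank (ZMod 2)
            ↥(LinearMap.ker (Matrix.circulant a).mulVecLin ⊓
                LinearMap.ker (Matrix.circulant b).mulVecLin ⊓
                LinearMap.ker (Matrix.circulant c).mulVecLin) : ℤ)
        + (Module.finrank (ZMod 2)
            ↥(LinearMap.ker (TT_row1 a b c).mulVecLin ⊓
                LinearMap.ker (TT_row2 a b c).mulVecLin ⊓
                LinearMap.ker (TT_row3 a b c).mulVecLin) : ℤ) := by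
  have hX := rank_TT_HX_add_finrank_ker a b c
  have hZ := rank_TT_HZ_add_finrank_ker a b c
  omega

/-- The number of logical qubits `k = 3N − rank(H_X) − rank(H_Z)` of a trivariate
tricycle code satisfies
`k = −N + dim(ker A ∩ ker B ∩ ker C) + dim(ker [0 C B] ∩ ker [C 0 A] ∩ ker [B A 0])`. -/
theorem tt_num_logical_qubits {G : Type*} [AddCommGroup G] [Fintype G] [DecidableEq G]
    (a b c : G → ZMod 2) :
    (3 * (Fintype.card G : ℤ)) - ((TT_HX a b c).rank : ℤ) - ((TT_HZ a b c).rank : ℤ) =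
      -(Fintype.card G : ℤ)
        + (Module.finrank (ZMod 2)
            ↥(LinearMap.ker (Matrix.circulant a).mulVecLin ⊓
                LinearMap.ker (Matrix.circulant b).mulVecLin ⊓
                LinearMap.ker (Matrix.circulant c).mulVecLin) : ℤ)
        + (Module.finrank (ZMod 2)
            ↥(LinearMap.ker (TT_row1 a b c).mulVecLin ⊓
                LinearMap.ker (TT_row2 a b c).mulVecLin ⊓
                LinearMap.ker (TT_row3 a b c).mulVecLin) : ℤ) :=
  tt_num_logical_qubits_general a b c
end

section
/- The TT code matrices satisfy the chain-complex conditions H_X · H_Zᵀ = 0 and M_Z · H_Z = 0, where H_X = [A B C], H_Z = [[0, Cᵀ, Bᵀ], [Cᵀ, 0, Aᵀ], [Bᵀ, Aᵀ, 0]], M_Z = [Aᵀ Bᵀ Cᵀ], for any circulants A = circ(a), B = circ(b), C = circ(c) over 𝔽₂ indexed by a finite additive abelian group G. -/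
open Matrix

/-- `M_Z = [Aᵀ Bᵀ Cᵀ]`. -/
def TT_MZ {G : Type*} [AddCommGroup G] (a b c : G → ZMod 2) :
    Matrix G (Fin 3 × G) (ZMod 2) :=
  Matrix.of fun g p =>
    ![(Matrix.circulant a)ᵀ, (Matrix.circulant b)ᵀ, (Matrix.circulant c)ᵀ] p.1 g p.2

/-! Every block of `H_X * H_Zᵀ` and of `M_Z * H_Z` has the form `X * Y + Y * X` with `X`, `Y`
circulant (a transposed circulant is again circulant). Circulants over an abelian group commute,
so each block is `2 * (X * Y)`, which vanishes over `𝔽₂`. -/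

theorem Matrix.of_blockRow_mul_comp {R J J' K L L' : Type*} [NonUnitalNonAssocSemiring R]
    [Fintype J] [Fintype L] (X : J → Matrix K L R) (M : Matrix J J' (Matrix L L' R)) :
    (of fun k (jl : J × L) => X jl.1 k jl.2) * comp J J' L L' R M =
      of fun k (jl : J' × L') => (∑ j, X j * M j jl.1) k jl.2 := by
  ext k ⟨j', l'⟩
  simp only [mul_apply, of_apply, comp_apply, sum_apply, Fintype.sum_prod_type]

theorem Matrix.of_blockRow_mul_comp_eq_zero {R J J' K L L' : Type*}
    [NonUnitalNonAssocSemiring R] [Fintype J] [Fintype L]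
    (X : J → Matrix K L R) (M : Matrix J J' (Matrix L L' R)) (h : ∀ j', ∑ j, X j * M j j' = 0) :
    (of fun k (jl : J × L) => X jl.1 k jl.2) * comp J J' L L' R M = 0 := by
  ext k ⟨j', l'⟩
  rw [of_blockRow_mul_comp, of_apply, h, zero_apply, zero_apply]

theorem Matrix.circulant_mul_add_circulant_mul_eq_zero {G R : Type*} [AddCommGroup G] [Fintype G]
    [DecidableEq G] [CommSemiring R] [CharP R 2] (v w : G → R) :
    circulant v * circulant w + circulant w * circulant v = 0 := by
  rw [circulant_mul_comm v w, CharTwo.add_self_eq_zero]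

/-- The TT code matrices satisfy the chain complex conditions
`H_X · H_Zᵀ = 0` and `M_Z · H_Z = 0`. -/
theorem tt_chain_complex {G : Type*} [AddCommGroup G] [Fintype G] [DecidableEq G]
    (a b c : G → ZMod 2) :
    TT_HX a b c * (TT_HZ a b c)ᵀ = 0 ∧ TT_MZ a b c * TT_HZ a b c = 0 := by
  have hHZ : TT_HZ a b c = comp (Fin 3) (Fin 3) G G (ZMod 2)
      !![0, (circulant c)ᵀ, (circulant b)ᵀ;
        (circulant c)ᵀ, 0, (circulant a)ᵀ;
        (circulant b)ᵀ, (circulant a)ᵀ, 0] := rfl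
  constructor
  · rw [hHZ, transpose_comp, TT_HX]
    refine of_blockRow_mul_comp_eq_zero _ _ fun j => ?_
    fin_cases j <;> simp [Fin.sum_univ_three, circulant_mul_add_circulant_mul_eq_zero]
  · rw [hHZ, TT_MZ]
    refine of_blockRow_mul_comp_eq_zero _ _ fun j => ?_
    fin_cases j <;>
      simp [Fin.sum_univ_three, transpose_circulant, circulant_mul_add_circulant_mul_eq_zero]
end

section
/- Let R be the G-indexed matrix over 𝔽₂ with R(i,j) = 1 iff i + j = 0, and let D_R = diag(R,R,R) be the 3N × 3N block-diagonal matrix. Then the involution v ↦ D_R v maps the set ker(M_Z) \ cs(H_Z) bijectively onto the set ker(H_X) \ rs(H_Z) and preserves Hamming weight. Consequently the meta-check distance d_M := min{|v| : v ∈ ker(M_Z) \ cs(H_Z)} equals the Z-distance d_Z := min{|v| : v ∈ ker(H_X) \ rs(H_Z)}. -/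
/-!
`D_R` permutes coordinates by `(k, g) ↦ (k, -g)`, so it is an involution preserving Hamming
weight. Since `circ(x)ᵀ = circ(x ∘ neg)`, this reindexing turns `M_Z` into `H_X` (rows read at
`-g`), and turns `H_Z` into `H_Zᵀ`; hence `D_R` carries `ker M_Z` onto `ker H_X` and `cs(H_Z)`
onto `rs(H_Z)`, and the two minimal weights agree.
-/
open Matrix

/-- Row space `rs(M)`: the span of the rows of `M`. -/
def rowSpace {m n : Type*} (M : Matrix m n (ZMod 2)) : Submodule (ZMod 2) (n → ZMod 2) :=
  Submodule.span (ZMod 2) (Set.range fun i => M i)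

/-- Column space `cs(M)`: the span of the columns of `M`. -/
def colSpace {m n : Type*} (M : Matrix m n (ZMod 2)) : Submodule (ZMod 2) (m → ZMod 2) :=
  Submodule.span (ZMod 2) (Set.range fun j i => M i j)

/-- The matrix `R` with `R(i,j) = 1` iff `i + j = 0`. -/
def Rmat {G : Type*} [AddCommGroup G] [DecidableEq G] : Matrix G G (ZMod 2) :=
  Matrix.of fun i j => if i + j = 0 then 1 else 0

/-- `D_R = diag(R, R, R)`. -/
def DRmat {G : Type*} [AddCommGroup G] [DecidableEq G] :
    Matrix (Fin 3 × G) (Fin 3 × G) (ZMod 2) :=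
  Matrix.of fun p q => if p.1 = q.1 then Rmat p.2 q.2 else 0

theorem hammingNorm_comp_equiv {ι κ β : Type*} [Fintype ι] [Fintype κ] [DecidableEq β] [Zero β]
    (x : κ → β) (e : ι ≃ κ) : hammingNorm (x ∘ e) = hammingNorm x :=
  Finset.card_equiv e (by simp)

theorem Set.BijOn.image_eq_image_of_comp {α β γ : Type*} {f : α → β} {s : Set α} {t : Set β}
    (h : Set.BijOn f s t) {g : β → γ} {g' : α → γ} (hg : ∀ x ∈ s, g (f x) = g' x) :
    g '' t = g' '' s := by
  rw [← h.image_eq, Set.image_image]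
  exact Set.image_congr hg

section Spaces

variable {m n m' n' : Type*}

theorem rowSpace_eq_colSpace_transpose (M : Matrix m n (ZMod 2)) : rowSpace M = colSpace Mᵀ :=
  rfl

theorem colSpace_eq_range_mulVecLin [Fintype n] (M : Matrix m n (ZMod 2)) :
    colSpace M = LinearMap.range M.mulVecLin :=
  (range_mulVecLin M).symm

theorem comp_mem_colSpace_submatrix_iff [Fintype n] [Fintype n'] (M : Matrix m n (ZMod 2))
    (e₁ : m' ≃ m) (e₂ : n' ≃ n) (v : m → ZMod 2) :
    v ∘ e₁ ∈ colSpace (M.submatrix e₁ e₂) ↔ v ∈ colSpace M := by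
  simp only [colSpace_eq_range_mulVecLin, LinearMap.mem_range, mulVecLin_apply,
    submatrix_mulVec_equiv]
  constructor
  · rintro ⟨w, hw⟩
    exact ⟨_, e₁.surjective.injective_comp_right hw⟩
  · rintro ⟨w, rfl⟩
    exact ⟨w ∘ e₂, by simp [Function.comp_assoc]⟩

end Spaces

section TT

variable {G : Type*} [AddCommGroup G]

def blockReflect : Fin 3 × G ≃ Fin 3 × G :=
  (Equiv.refl (Fin 3)).prodCongr (Equiv.neg G)

@[simp]
theorem blockReflect_apply (p : Fin 3 × G) : blockReflect p = (p.1, -p.2) :=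
  rfl

@[simp]
theorem blockReflect_symm : (blockReflect (G := G)).symm = blockReflect :=
  rfl

theorem DRmat_eq_submatrix_one [DecidableEq G] :
    DRmat =
      (1 : Matrix (Fin 3 × G) (Fin 3 × G) (ZMod 2)).submatrix blockReflect (Equiv.refl _) := by
  ext p q
  simp [DRmat, Rmat, one_apply, Prod.ext_iff, neg_eq_iff_add_eq_zero, ite_and]

theorem DRmat_mulVec [Fintype G] [DecidableEq G] (v : Fin 3 × G → ZMod 2) :
    DRmat *ᵥ v = v ∘ blockReflect := by
  rw [DRmat_eq_submatrix_one, submatrix_mulVec_equiv, one_mulVec]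
  rfl

theorem TT_MZ_eq_submatrix (a b c : G → ZMod 2) :
    TT_MZ a b c = (TT_HX a b c).submatrix (Equiv.neg G) blockReflect := by
  ext g ⟨k, h⟩
  simp only [TT_MZ, TT_HX, of_apply, submatrix_apply, blockReflect_apply, Equiv.neg_apply]
  revert k
  simp [Fin.forall_fin_succ, circulant_apply, neg_add_eq_sub]

theorem TT_HZ_transpose (a b c : G → ZMod 2) :
    (TT_HZ a b c)ᵀ = (TT_HZ a b c).submatrix blockReflect blockReflect := by
  ext ⟨i, g⟩ ⟨k, h⟩
  simp only [TT_HZ, of_apply, transpose_apply, submatrix_apply, blockReflect_apply]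
  revert i k
  simp [Fin.forall_fin_succ, circulant_apply, neg_add_eq_sub]

theorem TT_HX_mulVec_comp_blockReflect_eq_zero_iff [Fintype G] (a b c : G → ZMod 2)
    (v : Fin 3 × G → ZMod 2) :
    TT_HX a b c *ᵥ (v ∘ blockReflect) = 0 ↔ TT_MZ a b c *ᵥ v = 0 := by
  rw [TT_MZ_eq_submatrix, submatrix_mulVec_equiv, blockReflect_symm]
  exact (Equiv.neg G).surjective.injective_comp_right.eq_iff.symm

theorem comp_blockReflect_mem_rowSpace_TT_HZ_iff [Fintype G] (a b c : G → ZMod 2)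
    (v : Fin 3 × G → ZMod 2) :
    v ∘ blockReflect ∈ rowSpace (TT_HZ a b c) ↔ v ∈ colSpace (TT_HZ a b c) := by
  rw [rowSpace_eq_colSpace_transpose, TT_HZ_transpose, comp_mem_colSpace_submatrix_iff]

end TT

/-- The involution `v ↦ D_R v` maps `ker(M_Z) \ cs(H_Z)` bijectively onto
`ker(H_X) \ rs(H_Z)` preserving Hamming weight; consequently the meta-check
distance `d_M` equals the `Z`-distance `d_Z`. -/
theorem tt_metacheck_distance_eq_dZ {G : Type*} [AddCommGroup G] [Fintype G]
    [DecidableEq G] (a b c : G → ZMod 2) :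
    Set.BijOn (fun v => DRmat.mulVec v)
        {v : Fin 3 × G → ZMod 2 |
          (TT_MZ a b c).mulVec v = 0 ∧ v ∉ colSpace (TT_HZ a b c)}
        {v : Fin 3 × G → ZMod 2 |
          (TT_HX a b c).mulVec v = 0 ∧ v ∉ rowSpace (TT_HZ a b c)} ∧
      (∀ v : Fin 3 × G → ZMod 2, hammingNorm (DRmat.mulVec v) = hammingNorm v) ∧
      sInf {w : ℕ | ∃ v : Fin 3 × G → ZMod 2,
            ((TT_MZ a b c).mulVec v = 0 ∧ v ∉ colSpace (TT_HZ a b c)) ∧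
              hammingNorm v = w} =
        sInf {w : ℕ | ∃ v : Fin 3 × G → ZMod 2,
            ((TT_HX a b c).mulVec v = 0 ∧ v ∉ rowSpace (TT_HZ a b c)) ∧
              hammingNorm v = w} := by
  have hinv : Function.Involutive fun v : Fin 3 × G → ZMod 2 => DRmat *ᵥ v := fun v => by
    simp [DRmat_mulVec, Function.comp_def]
  have hnorm (v : Fin 3 × G → ZMod 2) : hammingNorm (DRmat *ᵥ v) = hammingNorm v := by
    rw [DRmat_mulVec, hammingNorm_comp_equiv]
  have hbij : Set.BijOn (fun v => DRmat *ᵥ v)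
      {v | TT_MZ a b c *ᵥ v = 0 ∧ v ∉ colSpace (TT_HZ a b c)}
      {v | TT_HX a b c *ᵥ v = 0 ∧ v ∉ rowSpace (TT_HZ a b c)} := by
    convert hinv.bijective.bijOn_preimage using 1
    ext v
    simp only [Set.mem_ofPred_eq, Set.mem_preimage, DRmat_mulVec,
      TT_HX_mulVec_comp_blockReflect_eq_zero_iff, comp_blockReflect_mem_rowSpace_TT_HZ_iff]
  exact ⟨hbij, hnorm, congrArg sInf (hbij.image_eq_image_of_comp fun v _ => hnorm v).symm⟩
end

section
/- Let A ⊆ G be a finite subset with a partition A = A_in ⊔ A_out ⊔ A_free into pairwise disjoint parts, and suppose the integrated Leibniz rule holds: for all α₁, α₂, α₃ ∈ G, |(α₁ + A) ∩ (α₂ + A_in) ∩ (α₃ + A_in)| + |(α₁ + A_out) ∩ (α₂ + A) ∩ (α₃ + A_in)| + [α₁ = α₂]·|(α₂ + A_out) ∩ (α₃ + A)| ≡ 0 (mod 2), where [α₁ = α₂] is 1 if α₁ = α₂ and 0 otherwise. Then: (i) |A_in| + |A_out| ≡ 0; (ii) for all distinct α₁, α₂ ∈ G: |(α₁ + A_in)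 ∩ (α₂ + A_in)| ≡ 0; (iii) for all distinct α₁, α₂ ∈ G: |(α₁ + A_out) ∩ (α₂ + A_out)| + |(α₁ + A_free) ∩ (α₂ + A_out)| ≡ 0; (iv) for all distinct α₁, α₂ ∈ G: |(α₁ + A_free) ∩ (α₂ + A_in)| ≡ 0; (v) for all pairwise distinct α₁, α₂, α₃ ∈ G: |(α₁ + A) ∩ (α₂ + A_in) ∩ (α₃ + A_in)| + |(α₁ + A_out) ∩ (α₂ + A) ∩ (α₃ + A_in)| ≡ 0 (all mod 2). -/
/-!
Each condition is the Leibniz rule at a well-chosen triple: `(0, 0, 0)` gives (i),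
`(α₁, α₂, α₁)` gives (ii), `(α₂, α₂, α₁)` gives (iii), `(α₁, α₂, α₂)` gives (iv), and any triple
with `α₁ ≠ α₂` gives (v). The triple intersections collapse because `A_in, A_out ⊆ A` and
`A_in ∩ A_out = ∅`; in (iii) and (iv), splitting `α + A` into the disjoint translates of the three
parts leaves terms that either occur twice or vanish mod 2 by (ii).
-/

open Pointwise Finset

namespace Finset

variable {G α : Type*} [AddGroup G] [AddAction G α] [DecidableEq α]

lemma vadd_finset_inter_vadd_finset_of_disjoint {s t : Finset α} (h : Disjoint s t) (a : G) :
    (a +ᵥ s) ∩ (a +ᵥ t) = ∅ := by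
  rw [← vadd_finset_inter, disjoint_iff_inter_eq_empty.1 h, vadd_finset_empty]

lemma card_vadd_finset_union_inter {s t : Finset α} (h : Disjoint s t) (a : G) (u : Finset α) :
    ((a +ᵥ (s ∪ t)) ∩ u).card = ((a +ᵥ s) ∩ u).card + ((a +ᵥ t) ∩ u).card := by
  rw [vadd_finset_union, union_inter_distrib_right, card_union_of_disjoint]
  exact (disjoint_iff_inter_eq_empty.2 (vadd_finset_inter_vadd_finset_of_disjoint h a)).mono
    inter_subset_left inter_subset_left

lemma card_vadd_finset_union_union_inter {s t r : Finset α} (hst : Disjoint s t)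
    (hsr : Disjoint s r) (htr : Disjoint t r) (a : G) (u : Finset α) :
    ((a +ᵥ (s ∪ t ∪ r)) ∩ u).card
      = ((a +ᵥ s) ∩ u).card + ((a +ᵥ t) ∩ u).card + ((a +ᵥ r) ∩ u).card := by
  rw [card_vadd_finset_union_inter (disjoint_union_left.2 ⟨hsr, htr⟩),
    card_vadd_finset_union_inter hst]

end Finset

section

variable {G : Type*} [AddGroup G] [DecidableEq G]

def IntegratedLeibniz (A Ain Aout : Finset G) : Prop :=
  ∀ α₁ α₂ α₃ : G,
    (((α₁ +ᵥ A) ∩ (α₂ +ᵥ Ain) ∩ (α₃ +ᵥ Ain)).card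
      + ((α₁ +ᵥ Aout) ∩ (α₂ +ᵥ A) ∩ (α₃ +ᵥ Ain)).card
      + (if α₁ = α₂ then ((α₂ +ᵥ Aout) ∩ (α₃ +ᵥ A)).card else 0)) % 2 = 0

namespace IntegratedLeibniz

variable {A Ain Aout Afree : Finset G}

theorem card_add_card_mod_two (h : IntegratedLeibniz A Ain Aout) (hin : Ain ⊆ A)
    (hout : Aout ⊆ A) (hd : Disjoint Ain Aout) : (Ain.card + Aout.card) % 2 = 0 := by
  simpa only [if_true, zero_vadd, inter_self, inter_eq_right.2 hin, inter_eq_left.2 hout,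
    disjoint_iff_inter_eq_empty.1 hd.symm, card_empty, add_zero] using h 0 0 0

theorem card_inter_in_mod_two_of_ne (h : IntegratedLeibniz A Ain Aout) (hin : Ain ⊆ A)
    (hd : Disjoint Ain Aout) {α₁ α₂ : G} (hne : α₁ ≠ α₂) :
    ((α₁ +ᵥ Ain) ∩ (α₂ +ᵥ Ain)).card % 2 = 0 := by
  have L := h α₁ α₂ α₁
  rwa [if_neg hne, inter_right_comm, inter_eq_right.2 (vadd_finset_subset_vadd_finset hin),
    inter_right_comm (α₁ +ᵥ Aout), vadd_finset_inter_vadd_finset_of_disjoint hd.symm,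
    empty_inter, card_empty, add_zero, add_zero] at L

theorem card_free_inter_in_mod_two_of_ne
    (h : IntegratedLeibniz (Ain ∪ Aout ∪ Afree) Ain Aout)
    (hd₁ : Disjoint Ain Aout) (hd₂ : Disjoint Ain Afree) (hd₃ : Disjoint Aout Afree)
    {α₁ α₂ : G} (hne : α₁ ≠ α₂) : ((α₁ +ᵥ Afree) ∩ (α₂ +ᵥ Ain)).card % 2 = 0 := by
  have hin : Ain ⊆ Ain ∪ Aout ∪ Afree := subset_union_left.trans subset_union_left
  have L := h α₁ α₂ α₂
  rw [if_neg hne, add_zero, inter_assoc, inter_self, inter_assoc,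
    inter_eq_right.2 (vadd_finset_subset_vadd_finset hin),
    card_vadd_finset_union_union_inter hd₁ hd₂ hd₃] at L
  have := h.card_inter_in_mod_two_of_ne hin hd₁ hne
  omega

theorem card_out_inter_out_add_card_free_inter_out_mod_two_of_ne
    (h : IntegratedLeibniz (Ain ∪ Aout ∪ Afree) Ain Aout)
    (hd₁ : Disjoint Ain Aout) (hd₂ : Disjoint Ain Afree) (hd₃ : Disjoint Aout Afree)
    {α₁ α₂ : G} (hne : α₁ ≠ α₂) :
    (((α₁ +ᵥ Aout) ∩ (α₂ +ᵥ Aout)).card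
      + ((α₁ +ᵥ Afree) ∩ (α₂ +ᵥ Aout)).card) % 2 = 0 := by
  have hin : Ain ⊆ Ain ∪ Aout ∪ Afree := subset_union_left.trans subset_union_left
  have hout : Aout ⊆ Ain ∪ Aout ∪ Afree := subset_union_right.trans subset_union_left
  have L := h α₂ α₂ α₁
  rw [if_pos rfl, inter_eq_right.2 (vadd_finset_subset_vadd_finset hin),
    inter_eq_left.2 (vadd_finset_subset_vadd_finset hout),
    inter_comm (α₂ +ᵥ Aout) (α₁ +ᵥ Ain), inter_comm (α₂ +ᵥ Aout),
    card_vadd_finset_union_union_inter hd₁ hd₂ hd₃] at L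
  have := h.card_inter_in_mod_two_of_ne hin hd₁ hne.symm
  omega

theorem mod_two_of_ne (h : IntegratedLeibniz A Ain Aout) {α₁ α₂ : G} (hne : α₁ ≠ α₂) (α₃ : G) :
    (((α₁ +ᵥ A) ∩ (α₂ +ᵥ Ain) ∩ (α₃ +ᵥ Ain)).card
      + ((α₁ +ᵥ Aout) ∩ (α₂ +ᵥ A) ∩ (α₃ +ᵥ Ain)).card) % 2 = 0 := by
  simpa only [if_neg hne, add_zero] using h α₁ α₂ α₃

end IntegratedLeibniz

end

/-- If a partition `A = A_in ⊔ A_out ⊔ A_free` of a finite subset of `G` satisfies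
the integrated Leibniz rule for the 3-fold cup product, then the cup-product
conditions (i)–(v) hold. -/
theorem cup_conditions_of_integrated_leibniz {G : Type*} [AddCommGroup G]
    [DecidableEq G] (A Ain Aout Afree : Finset G)
    (hd₁ : Disjoint Ain Aout) (hd₂ : Disjoint Ain Afree) (hd₃ : Disjoint Aout Afree)
    (hpart : A = Ain ∪ Aout ∪ Afree)
    (hLeib : ∀ α₁ α₂ α₃ : G,
      (((α₁ +ᵥ A) ∩ (α₂ +ᵥ Ain) ∩ (α₃ +ᵥ Ain)).card
        + ((α₁ +ᵥ Aout) ∩ (α₂ +ᵥ A) ∩ (α₃ +ᵥ Ain)).card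
        + (if α₁ = α₂ then ((α₂ +ᵥ Aout) ∩ (α₃ +ᵥ A)).card else 0)) % 2 = 0) :
    (Ain.card + Aout.card) % 2 = 0 ∧
      (∀ α₁ α₂ : G, α₁ ≠ α₂ →
        ((α₁ +ᵥ Ain) ∩ (α₂ +ᵥ Ain)).card % 2 = 0) ∧
      (∀ α₁ α₂ : G, α₁ ≠ α₂ →
        (((α₁ +ᵥ Aout) ∩ (α₂ +ᵥ Aout)).card
          + ((α₁ +ᵥ Afree) ∩ (α₂ +ᵥ Aout)).card) % 2 = 0) ∧
      (∀ α₁ α₂ : G, α₁ ≠ α₂ →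
        ((α₁ +ᵥ Afree) ∩ (α₂ +ᵥ Ain)).card % 2 = 0) ∧
      (∀ α₁ α₂ α₃ : G, α₁ ≠ α₂ → α₁ ≠ α₃ → α₂ ≠ α₃ →
        (((α₁ +ᵥ A) ∩ (α₂ +ᵥ Ain) ∩ (α₃ +ᵥ Ain)).card
          + ((α₁ +ᵥ Aout) ∩ (α₂ +ᵥ A) ∩ (α₃ +ᵥ Ain)).card) % 2 = 0) := by
  subst hpart
  have h : IntegratedLeibniz (Ain ∪ Aout ∪ Afree) Ain Aout := hLeib
  have hin : Ain ⊆ Ain ∪ Aout ∪ Afree := subset_union_left.trans subset_union_left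
  have hout : Aout ⊆ Ain ∪ Aout ∪ Afree := subset_union_right.trans subset_union_left
  exact ⟨h.card_add_card_mod_two hin hout hd₁,
    fun _ _ => h.card_inter_in_mod_two_of_ne hin hd₁,
    fun _ _ => h.card_out_inter_out_add_card_free_inter_out_mod_two_of_ne hd₁ hd₂ hd₃,
    fun _ _ => h.card_free_inter_in_mod_two_of_ne hd₁ hd₂ hd₃,
    fun _ _ α₃ h₁₂ _ _ => h.mod_two_of_ne h₁₂ α₃⟩
end

section
/- Suppose the supports of a, b, c : G → 𝔽₂ are all nonempty, and suppose the subgroup of G generated by the set of differences {a₁ − a₂ : a₁, a₂ ∈ supp(a)} ∪ {b₁ − b₂ : b₁, b₂ ∈ supp(b)} ∪ {c₁ − c₂ : c₁, c₂ ∈ supp(c)} is all of G. Then the Tanner graph of the TT code defined by (a, b, c) is connected. -/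
open Matrix

/-- The Tanner graph of the TT code: vertices are the disjoint union of the
X-checks (`G`), the Z-checks (`Fin 3 × G`) and the qubits (`Fin 3 × G`); an
X-check `r` is adjacent to a qubit `q` iff `H_X r q = 1`, a Z-check `s` is
adjacent to a qubit `q` iff `H_Z s q = 1`, and there are no other edges. -/
def tannerGraph {G : Type*} [AddCommGroup G] (a b c : G → ZMod 2) :
    SimpleGraph (G ⊕ ((Fin 3 × G) ⊕ (Fin 3 × G))) :=
  SimpleGraph.fromRel fun u v =>
    match u, v with
    | Sum.inl r, Sum.inr (Sum.inr q) => TT_HX a b c r q = 1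
    | Sum.inr (Sum.inl s), Sum.inr (Sum.inr q) => TT_HZ a b c s q = 1
    | _, _ => False

/-!
Two X-checks `r` and `r + (x - y)`, with `x, y` in the support of one of `a, b, c`, share a
qubit. Hence the shifts `d` such that every X-check `r` reaches `r + d` form a subgroup
containing all support differences, which is `G` by hypothesis. Every qubit `(i, q)` is adjacent
to an X-check because the `i`-th of `a, b, c` has nonempty support, and every Z-check is adjacent
to a qubit because each block row of `H_Z` contains a nonzero circulant.
-/

lemma SimpleGraph.reachable_of_addSubgroup_closure_eq_top {V G : Type*} [AddGroup G]
    {Γ : SimpleGraph V} {f : G → V} {S : Set G} (hS : AddSubgroup.closure S = ⊤)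
    (hshift : ∀ d ∈ S, ∀ r, Γ.Reachable (f r) (f (r + d))) (r s : G) :
    Γ.Reachable (f r) (f s) := by
  have hclosure : ∀ d ∈ AddSubgroup.closure S, ∀ r, Γ.Reachable (f r) (f (r + d)) := by
    intro d hd
    induction hd using AddSubgroup.closure_induction with
    | mem d hd => exact hshift d hd
    | zero => simp
    | add d e _ _ hd he => exact fun r => (hd r).trans (by simpa [add_assoc] using he (r + d))
    | neg d _ hd => exact fun r => by simpa using (hd (r + -d)).symm
  simpa using hclosure (-r + s) (hS ▸ AddSubgroup.mem_top _) r

section TannerGraph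

variable {G : Type*} [AddCommGroup G] {a b c : G → ZMod 2}

lemma TT_HX_apply (r : G) (i : Fin 3) (q : G) : TT_HX a b c r (i, q) = ![a, b, c] i (r - q) := by
  fin_cases i <;> rfl

lemma TT_HZ_apply (i : Fin 3) (s : G) (j : Fin 3) (q : G) :
    TT_HZ a b c (i, s) (j, q) = ![![0, c, b], ![c, 0, a], ![b, a, 0]] i j (q - s) := by
  fin_cases i <;> fin_cases j <;> rfl

lemma tannerGraph_adj_xCheck_qubit (r : G) (i : Fin 3) (q : G) :
    (tannerGraph a b c).Adj (.inl r) (.inr (.inr (i, q))) ↔ ![a, b, c] i (r - q) = 1 := by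
  simp [tannerGraph, TT_HX_apply]

lemma tannerGraph_adj_zCheck_qubit (i : Fin 3) (s : G) (j : Fin 3) (q : G) :
    (tannerGraph a b c).Adj (.inr (.inl (i, s))) (.inr (.inr (j, q))) ↔
      ![![0, c, b], ![c, 0, a], ![b, a, 0]] i j (q - s) = 1 := by
  simp [tannerGraph, TT_HZ_apply]

lemma tannerGraph_reachable_xCheck_add_sub {i : Fin 3} {x y : G}
    (hx : ![a, b, c] i x = 1) (hy : ![a, b, c] i y = 1) (r : G) :
    (tannerGraph a b c).Reachable (.inl r) (.inl (r + (x - y))) := by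
  have hr : (tannerGraph a b c).Adj (.inl r) (.inr (.inr (i, r - y))) :=
    (tannerGraph_adj_xCheck_qubit _ _ _).mpr (by simpa using hy)
  have hr' : (tannerGraph a b c).Adj (.inl (r + (x - y))) (.inr (.inr (i, r - y))) :=
    (tannerGraph_adj_xCheck_qubit _ _ _).mpr (by simpa [add_sub_sub_cancel] using hx)
  exact hr.reachable.trans hr'.reachable.symm

lemma tannerGraph_reachable_xChecks
    (hgen : AddSubgroup.closure
        ({d : G | ∃ x y, a x = 1 ∧ a y = 1 ∧ d = x - y} ∪
          {d : G | ∃ x y, b x = 1 ∧ b y = 1 ∧ d = x - y} ∪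
          {d : G | ∃ x y, c x = 1 ∧ c y = 1 ∧ d = x - y}) = ⊤) (r s : G) :
    (tannerGraph a b c).Reachable (.inl r) (.inl s) := by
  refine SimpleGraph.reachable_of_addSubgroup_closure_eq_top hgen ?_ r s
  rintro d ((⟨x, y, hx, hy, rfl⟩ | ⟨x, y, hx, hy, rfl⟩) | ⟨x, y, hx, hy, rfl⟩)
  · exact tannerGraph_reachable_xCheck_add_sub (i := 0) hx hy
  · exact tannerGraph_reachable_xCheck_add_sub (i := 1) hx hy
  · exact tannerGraph_reachable_xCheck_add_sub (i := 2) hx hy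

lemma tannerGraph_exists_xCheck_adj_qubit (hsupp : ∀ i, ∃ x, ![a, b, c] i x = 1)
    (i : Fin 3) (q : G) : ∃ r, (tannerGraph a b c).Adj (.inl r) (.inr (.inr (i, q))) := by
  obtain ⟨x, hx⟩ := hsupp i
  exact ⟨x + q, (tannerGraph_adj_xCheck_qubit _ _ _).mpr (by simpa using hx)⟩

lemma tannerGraph_exists_qubit_adj_zCheck {x y : G} (hb : b x = 1) (hc : c y = 1)
    (i : Fin 3) (s : G) : ∃ q, (tannerGraph a b c).Adj (.inr (.inl (i, s))) (.inr (.inr q)) := by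
  fin_cases i
  · exact ⟨(1, s + y), (tannerGraph_adj_zCheck_qubit _ _ _ _).mpr (by simpa using hc)⟩
  · exact ⟨(0, s + y), (tannerGraph_adj_zCheck_qubit _ _ _ _).mpr (by simpa using hc)⟩
  · exact ⟨(0, s + x), (tannerGraph_adj_zCheck_qubit _ _ _ _).mpr (by simpa using hb)⟩

end TannerGraph

theorem tt_tanner_connected_general {G : Type*} [AddCommGroup G] (a b c : G → ZMod 2)
    (ha : ∃ x, a x = 1) (hb : ∃ x, b x = 1) (hc : ∃ x, c x = 1)
    (hgen : AddSubgroup.closure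
        ({d : G | ∃ x y, a x = 1 ∧ a y = 1 ∧ d = x - y} ∪
          {d : G | ∃ x y, b x = 1 ∧ b y = 1 ∧ d = x - y} ∪
          {d : G | ∃ x y, c x = 1 ∧ c y = 1 ∧ d = x - y}) = ⊤) :
    (tannerGraph a b c).Connected := by
  obtain ⟨xb, hxb⟩ := hb
  obtain ⟨xc, hxc⟩ := hc
  have hsupp : ∀ i, ∃ x, ![a, b, c] i x = 1 := fun i => by
    fin_cases i
    exacts [ha, ⟨xb, hxb⟩, ⟨xc, hxc⟩]
  have hqubit (q : Fin 3 × G) : (tannerGraph a b c).Reachable (.inl 0) (.inr (.inr q)) := by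
    obtain ⟨r, hr⟩ := tannerGraph_exists_xCheck_adj_qubit hsupp q.1 q.2
    exact (tannerGraph_reachable_xChecks hgen 0 r).trans hr.reachable
  refine (SimpleGraph.connected_iff_exists_forall_reachable _).mpr ⟨.inl 0, ?_⟩
  rintro (r | s | q)
  · exact tannerGraph_reachable_xChecks hgen 0 r
  · obtain ⟨q, hq⟩ := tannerGraph_exists_qubit_adj_zCheck hxb hxc s.1 s.2
    exact (hqubit q).trans hq.reachable.symm
  · exact hqubit q

/-- If the supports of `a`, `b`, `c` are nonempty and the differences of support
elements generate `G`, then the Tanner graph of the TT code is connected. -/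
theorem tt_tanner_connected {G : Type*} [AddCommGroup G] [Fintype G]
    [DecidableEq G] (a b c : G → ZMod 2)
    (ha : ∃ x, a x = 1) (hb : ∃ x, b x = 1) (hc : ∃ x, c x = 1)
    (hgen : AddSubgroup.closure
        ({d : G | ∃ x y, a x = 1 ∧ a y = 1 ∧ d = x - y} ∪
          {d : G | ∃ x y, b x = 1 ∧ b y = 1 ∧ d = x - y} ∪
          {d : G | ∃ x y, c x = 1 ∧ c y = 1 ∧ d = x - y}) = ⊤) :
    (tannerGraph a b c).Connected :=
  tt_tanner_connected_general a b c ha hb hc hgen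
end

section
/- Suppose f, g, h, j ∈ 𝔽₂[G] satisfy a⋆f = b⋆f = c⋆f = 0 and c⋆h + b⋆j = c⋆g + a⋆j = b⋆g + a⋆h = 0. Define, for α ∈ G, the X-type operators X̄⁽¹⁾_α := X(δ_α⋆f, 0, 0), X̄⁽²⁾_α := X(δ_α⋆g, δ_α⋆h, δ_α⋆j), X̄⁽³⁾_α := X(0, 0, δ_α⋆f), and the Z-type operators Z̄⁽¹⁾_α := Z(δ_α⋆reflect(h), δ_α⋆reflect(g), 0), Z̄⁽²⁾_α := Z(0, δ_α⋆reflect(f), 0), Z̄⁽³⁾_α := Z(0, δ_α⋆reflect(j), δ_α⋆reflect(h)). Then for all α, β, γ ∈ G: (1) each X̄⁽ⁱ⁾_α (i = 1, 2, 3) has even overlap with each of the Z-check generators Z_a(γ) := Z(0, reflect(c)⋆δ_γ, reflect(b)⋆δ_γ), Z_b(γ) := Z(reflect(c)⋆δ_γ, 0, reflect(a)⋆δ_γ), Z_c(γ) := Z(reflect(b)⋆δ_γ, reflect(a)⋆δ_γ, 0); (2) each Z̄⁽ⁱ⁾_α (i = 1, 2, 3) has even overlap with each X-check generator X(γ) :=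 X(a⋆δ_γ, b⋆δ_γ, c⋆δ_γ); and (3) for all i ≠ j, X̄⁽ⁱ⁾_α has even overlap with Z̄⁽ʲ⁾_β. Hence the X̄⁽ⁱ⁾ and Z̄⁽ⁱ⁾ commute with the full stabilizer group of the TT code, and operators from different logical sets mutually commute. -/
/-- Convolution of functions `G → 𝔽₂`: `(P ⋆ Q)(x) = ∑_y P(y)·Q(x − y)`. -/
def conv {G : Type*} [AddCommGroup G] [Fintype G] (P Q : G → ZMod 2) : G → ZMod 2 :=
  fun x => ∑ y, P y * Q (x - y)

/-- `reflect(P)(x) = P(−x)`, corresponding to the transpose `Pᵀ`. -/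
def reflect {G : Type*} [Neg G] (P : G → ZMod 2) : G → ZMod 2 :=
  fun x => P (-x)

/-- The indicator function `δ_α` of `α ∈ G`. -/
def delta {G : Type*} [DecidableEq G] (α : G) : G → ZMod 2 :=
  fun x => if x = α then 1 else 0

/-- The data of a (three-block) Pauli operator: three support polynomials, one for
each of the three blocks of qubits indexed by `G`. -/
def Pauli3 (G : Type*) : Type _ :=
  (G → ZMod 2) × (G → ZMod 2) × (G → ZMod 2)

/-- The X-type operator `X(P,Q,S)` and the Z-type operator `Z(P̄,Q̄,S̄)` have even
overlap (i.e. commute) iff `(P⋆reflect(P̄) + Q⋆reflect(Q̄) + S⋆reflect(S̄))(0) = 0`. -/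
def evenOverlap {G : Type*} [AddCommGroup G] [Fintype G] (X Z : Pauli3 G) : Prop :=
  conv X.1 (reflect Z.1) 0 + conv X.2.1 (reflect Z.2.1) 0
    + conv X.2.2 (reflect Z.2.2) 0 = 0

/-- `X̄⁽¹⁾_α = X(δ_α⋆f, 0, 0)`. -/
def Xbar1 {G : Type*} [AddCommGroup G] [Fintype G] [DecidableEq G]
    (f : G → ZMod 2) (α : G) : Pauli3 G :=
  (conv (delta α) f, 0, 0)

/-- `X̄⁽²⁾_α = X(δ_α⋆g, δ_α⋆h, δ_α⋆j)`. -/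
def Xbar2 {G : Type*} [AddCommGroup G] [Fintype G] [DecidableEq G]
    (g h j : G → ZMod 2) (α : G) : Pauli3 G :=
  (conv (delta α) g, conv (delta α) h, conv (delta α) j)

/-- `X̄⁽³⁾_α = X(0, 0, δ_α⋆f)`. -/
def Xbar3 {G : Type*} [AddCommGroup G] [Fintype G] [DecidableEq G]
    (f : G → ZMod 2) (α : G) : Pauli3 G :=
  (0, 0, conv (delta α) f)

/-- `Z̄⁽¹⁾_α = Z(δ_α⋆hᵀ, δ_α⋆gᵀ, 0)`. -/
def Zbar1 {G : Type*} [AddCommGroup G] [Fintype G] [DecidableEq G]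
    (g h : G → ZMod 2) (α : G) : Pauli3 G :=
  (conv (delta α) (reflect h), conv (delta α) (reflect g), 0)

/-- `Z̄⁽²⁾_α = Z(0, δ_α⋆fᵀ, 0)`. -/
def Zbar2 {G : Type*} [AddCommGroup G] [Fintype G] [DecidableEq G]
    (f : G → ZMod 2) (α : G) : Pauli3 G :=
  (0, conv (delta α) (reflect f), 0)

/-- `Z̄⁽³⁾_α = Z(0, δ_α⋆jᵀ, δ_α⋆hᵀ)`. -/
def Zbar3 {G : Type*} [AddCommGroup G] [Fintype G] [DecidableEq G]
    (h j : G → ZMod 2) (α : G) : Pauli3 G :=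
  (0, conv (delta α) (reflect j), conv (delta α) (reflect h))

/-- The `Z_a`-check generator `Z_a(γ) = Z(0, cᵀ⋆δ_γ, bᵀ⋆δ_γ)`. -/
def ZcheckA {G : Type*} [AddCommGroup G] [Fintype G] [DecidableEq G]
    (b c : G → ZMod 2) (γ : G) : Pauli3 G :=
  (0, conv (reflect c) (delta γ), conv (reflect b) (delta γ))

/-- The `Z_b`-check generator `Z_b(γ) = Z(cᵀ⋆δ_γ, 0, aᵀ⋆δ_γ)`. -/
def ZcheckB {G : Type*} [AddCommGroup G] [Fintype G] [DecidableEq G]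
    (a c : G → ZMod 2) (γ : G) : Pauli3 G :=
  (conv (reflect c) (delta γ), 0, conv (reflect a) (delta γ))

/-- The `Z_c`-check generator `Z_c(γ) = Z(bᵀ⋆δ_γ, aᵀ⋆δ_γ, 0)`. -/
def ZcheckC {G : Type*} [AddCommGroup G] [Fintype G] [DecidableEq G]
    (a b : G → ZMod 2) (γ : G) : Pauli3 G :=
  (conv (reflect b) (delta γ), conv (reflect a) (delta γ), 0)

/-- The X-check generator `X(γ) = X(a⋆δ_γ, b⋆δ_γ, c⋆δ_γ)`. -/
def Xcheck {G : Type*} [AddCommGroup G] [Fintype G] [DecidableEq G]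
    (a b c : G → ZMod 2) (γ : G) : Pauli3 G :=
  (conv a (delta γ), conv b (delta γ), conv c (delta γ))

/-!
Every overlap in the statement pairs a translate `y ↦ P (y - u)` with a reflected translate
`y ↦ Q (v - y)`, and the substitution `z = v - y` turns such a pairing into the single
convolution value `(Q ⋆ P)(v - u)`. The overlaps with the checks are therefore the hypotheses
evaluated at a point, and each cross overlap has the form `(P ⋆ Q + Q ⋆ P)(x)`, which vanishes
because convolution is commutative and `𝔽₂` has characteristic two.
-/

section Convolution

variable {G : Type*} [AddCommGroup G] [Fintype G]

lemma conv_comm (P Q : G → ZMod 2) : conv P Q = conv Q P := by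
  funext x
  exact Fintype.sum_equiv (Equiv.subLeft x) _ _
    fun y => by simp [Equiv.subLeft, sub_sub_cancel, mul_comm]

lemma conv_add_conv_swap (P Q : G → ZMod 2) : conv P Q + conv Q P = 0 := by
  rw [conv_comm P Q]
  exact CharTwo.add_self_eq_zero _

lemma conv_reflect_apply_zero (X Z : G → ZMod 2) : conv X (reflect Z) 0 = ∑ y, X y * Z y := by
  simp [conv, reflect]

lemma sum_sub_mul_sub_eq_conv (P Q : G → ZMod 2) (u v : G) :
    ∑ y, P (y - u) * Q (v - y) = conv Q P (v - u) :=
  Fintype.sum_equiv (Equiv.subLeft v) _ _ fun y => by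
    simp [Equiv.subLeft, mul_comm, sub_sub_sub_cancel_left]

variable [DecidableEq G]

lemma delta_conv_apply (u : G) (P : G → ZMod 2) (y : G) : conv (delta u) P y = P (y - u) := by
  simp [conv, delta, ite_mul]

lemma conv_delta_apply (P : G → ZMod 2) (v y : G) : conv P (delta v) y = P (y - v) := by
  rw [conv_comm, delta_conv_apply]

end Convolution

section LogicalOperators

variable {G : Type*} [AddCommGroup G] [Fintype G] [DecidableEq G] (a b c f g h j : G → ZMod 2)

lemma Xbar_evenOverlap_Zcheck
    (hfa : conv a f = 0) (hfb : conv b f = 0) (hfc : conv c f = 0)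
    (h₁ : conv c h + conv b j = 0) (h₂ : conv c g + conv a j = 0)
    (h₃ : conv b g + conv a h = 0) (α γ : G) :
    evenOverlap (Xbar1 f α) (ZcheckA b c γ) ∧ evenOverlap (Xbar1 f α) (ZcheckB a c γ) ∧
      evenOverlap (Xbar1 f α) (ZcheckC a b γ) ∧ evenOverlap (Xbar2 g h j α) (ZcheckA b c γ) ∧
      evenOverlap (Xbar2 g h j α) (ZcheckB a c γ) ∧ evenOverlap (Xbar2 g h j α) (ZcheckC a b γ) ∧
      evenOverlap (Xbar3 f α) (ZcheckA b c γ) ∧ evenOverlap (Xbar3 f α) (ZcheckB a c γ) ∧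
      evenOverlap (Xbar3 f α) (ZcheckC a b γ) := by
  refine ⟨?_, ?_, ?_, ?_, ?_, ?_, ?_, ?_, ?_⟩ <;>
    simp only [evenOverlap, Xbar1, Xbar2, Xbar3, ZcheckA, ZcheckB, ZcheckC,
      conv_reflect_apply_zero, delta_conv_apply, conv_delta_apply, reflect, neg_sub,
      sum_sub_mul_sub_eq_conv, Pi.zero_apply, zero_mul, mul_zero, Finset.sum_const_zero,
      add_zero, zero_add]
  exacts [congrFun hfc _, congrFun hfb _, congrFun h₁ _, congrFun h₂ _, congrFun h₃ _,
    congrFun hfb _, congrFun hfa _]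

lemma Xcheck_evenOverlap_Zbar (hfb : conv b f = 0) (h₁ : conv c h + conv b j = 0)
    (h₃ : conv b g + conv a h = 0) (α γ : G) :
    evenOverlap (Xcheck a b c γ) (Zbar1 g h α) ∧ evenOverlap (Xcheck a b c γ) (Zbar2 f α) ∧
      evenOverlap (Xcheck a b c γ) (Zbar3 h j α) := by
  refine ⟨?_, ?_, ?_⟩ <;>
    simp only [evenOverlap, Xcheck, Zbar1, Zbar2, Zbar3,
      conv_reflect_apply_zero, delta_conv_apply, conv_delta_apply, reflect, neg_sub,
      sum_sub_mul_sub_eq_conv, Pi.zero_apply, mul_zero, Finset.sum_const_zero,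
      add_zero, zero_add]
  · rw [add_comm, conv_comm h, conv_comm g]
    exact congrFun h₃ _
  · rw [conv_comm]
    exact congrFun hfb _
  · rw [add_comm, conv_comm j, conv_comm h]
    exact congrFun h₁ _

lemma Xbar_evenOverlap_Zbar (α β : G) :
    evenOverlap (Xbar1 f α) (Zbar2 f β) ∧ evenOverlap (Xbar1 f α) (Zbar3 h j β) ∧
      evenOverlap (Xbar2 g h j α) (Zbar1 g h β) ∧ evenOverlap (Xbar2 g h j α) (Zbar3 h j β) ∧
      evenOverlap (Xbar3 f α) (Zbar1 g h β) ∧ evenOverlap (Xbar3 f α) (Zbar2 f β) := by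
  refine ⟨?_, ?_, ?_, ?_, ?_, ?_⟩ <;>
    simp only [evenOverlap, Xbar1, Xbar2, Xbar3, Zbar1, Zbar2, Zbar3,
      conv_reflect_apply_zero, delta_conv_apply, reflect, neg_sub,
      sum_sub_mul_sub_eq_conv, Pi.zero_apply, zero_mul, mul_zero, Finset.sum_const_zero,
      add_zero, zero_add]
  exacts [congrFun (conv_add_conv_swap h g) _, congrFun (conv_add_conv_swap j h) _]

end LogicalOperators

/-- Given `f, g, h, j` with `a⋆f = b⋆f = c⋆f = 0` and
`c⋆h + b⋆j = c⋆g + a⋆j = b⋆g + a⋆h = 0`, the three logical sets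
`(X̄⁽ⁱ⁾, Z̄⁽ⁱ⁾)` commute with the full stabilizer group of the TT code, and
operators from different logical sets mutually commute. -/
theorem tt_logical_sets {G : Type*} [AddCommGroup G] [Fintype G] [DecidableEq G]
    (a b c f g h j : G → ZMod 2)
    (hfa : conv a f = 0) (hfb : conv b f = 0) (hfc : conv c f = 0)
    (h₁ : conv c h + conv b j = 0) (h₂ : conv c g + conv a j = 0)
    (h₃ : conv b g + conv a h = 0) :
    ∀ α β γ : G,
      -- (1) each X̄⁽ⁱ⁾_α has even overlap with every Z-check generator
      (evenOverlap (Xbar1 f α) (ZcheckA b c γ) ∧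
        evenOverlap (Xbar1 f α) (ZcheckB a c γ) ∧
        evenOverlap (Xbar1 f α) (ZcheckC a b γ) ∧
        evenOverlap (Xbar2 g h j α) (ZcheckA b c γ) ∧
        evenOverlap (Xbar2 g h j α) (ZcheckB a c γ) ∧
        evenOverlap (Xbar2 g h j α) (ZcheckC a b γ) ∧
        evenOverlap (Xbar3 f α) (ZcheckA b c γ) ∧
        evenOverlap (Xbar3 f α) (ZcheckB a c γ) ∧
        evenOverlap (Xbar3 f α) (ZcheckC a b γ)) ∧
      -- (2) each Z̄⁽ⁱ⁾_α has even overlap with every X-check generator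
      (evenOverlap (Xcheck a b c γ) (Zbar1 g h α) ∧
        evenOverlap (Xcheck a b c γ) (Zbar2 f α) ∧
        evenOverlap (Xcheck a b c γ) (Zbar3 h j α)) ∧
      -- (3) operators from different logical sets mutually commute
      (evenOverlap (Xbar1 f α) (Zbar2 f β) ∧
        evenOverlap (Xbar1 f α) (Zbar3 h j β) ∧
        evenOverlap (Xbar2 g h j α) (Zbar1 g h β) ∧
        evenOverlap (Xbar2 g h j α) (Zbar3 h j β) ∧
        evenOverlap (Xbar3 f α) (Zbar1 g h β) ∧
        evenOverlap (Xbar3 f α) (Zbar2 f β)) := by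
  intro α β γ
  exact ⟨Xbar_evenOverlap_Zcheck a b c f g h j hfa hfb hfc h₁ h₂ h₃ α γ,
    Xcheck_evenOverlap_Zbar a b c f g h j hfb h₁ h₃ α γ, Xbar_evenOverlap_Zbar f g h j α β⟩
end
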